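/- Let P = {1,...,n} and m < n/2. Consider the n - m bicolorings B_1,...,B_{n-m} where for i ≤ n-2m+1, B_i colors the leftmost m+i-1 points red and the rest blue, and for i ≥ n-2m+2, B_i colors the points in {i-n+2m, ..., i+m-1} red and the remaining m points blue. Then any family of intervals that contains a balanced interval for each B_i has size at least n - m. -/

import Mathlib

/-!
For `p ∈ {1,…,n}` the red points of `B_i` form the window `[i + 2m - n, m + i - 1]`. An interval
meets `{1,…,n}` in an integer interval `[a, b]`, and if it is balanced for `B_i` it cannot contain
the whole window (which has `n - m > n / 2` points), so its blue points lie on one side of the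
window and `[a, b]` is centred at that end: `a + b + 1 = 2(m + i)` or `a + b + 1 = 2(i + 2m - n)`.
These two values of `i` differ by `n - m`, so at most one of them lies in `[1, n - m]`: an interval
is balanced for at most one `B_i`, and the family needs `n - m` distinct intervals.
-/

/-- Red points of the bicoloring `B_i` from Theorem 3(a): for
`i ≤ n - 2m + 1`, the leftmost `m + i - 1` points are red; for larger `i`,
the points in `{i - n + 2m, …, i + m - 1}` are red (the condition
`i + 2m ≤ p + n` encodes `i - n + 2m ≤ p` in `ℕ`). -/
def mRestrictedRed (n m i p : ℕ) : Prop :=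
  if i ≤ n - 2 * m + 1 then p ≤ m + i - 1
  else (i + 2 * m ≤ p + n ∧ p ≤ i + m - 1)

instance (n m i p : ℕ) : Decidable (mRestrictedRed n m i p) := by
  unfold mRestrictedRed; infer_instance

open Finset

noncomputable def pointsIn (n : ℕ) (I : ℝ × ℝ) : Finset ℕ :=
  (Icc 1 n).filter fun p : ℕ => I.1 ≤ p ∧ (p : ℝ) ≤ I.2

lemma pointsIn_eq_Icc (n : ℕ) (I : ℝ × ℝ) :
    pointsIn n I = Icc (max 1 ⌈I.1⌉₊) (min n ⌊I.2⌋₊) := by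
  ext p
  simp only [pointsIn, mem_filter, mem_Icc, max_le_iff, le_min_iff, Nat.ceil_le]
  constructor
  · rintro ⟨⟨hp, hpn⟩, h1, h2⟩
    exact ⟨⟨hp, h1⟩, hpn, (Nat.le_floor_iff' (by omega)).2 h2⟩
  · rintro ⟨⟨hp, h1⟩, hpn, h2⟩
    exact ⟨⟨hp, hpn⟩, h1, (Nat.le_floor_iff' (by omega)).1 h2⟩

lemma filter_pointsIn (n : ℕ) (I : ℝ × ℝ) (C : ℕ → Prop) [DecidablePred C] :
    (Icc 1 n).filter (fun p : ℕ => I.1 ≤ p ∧ (p : ℝ) ≤ I.2 ∧ C p) =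
      {p ∈ pointsIn n I | C p} := by
  simp only [pointsIn, filter_filter, and_assoc]

def IsBalanced (S : Finset ℕ) (red : ℕ → Prop) [DecidablePred red] : Prop :=
  #{p ∈ S | red p} = #{p ∈ S | ¬ red p} ∧ 0 < #{p ∈ S | red p}

lemma card_filter_Icc_of_iff {a b l r : ℕ} {C : ℕ → Prop} [DecidablePred C]
    (hC : ∀ p ∈ Icc a b, C p ↔ l ≤ p ∧ p ≤ r) :
    #{p ∈ Icc a b | C p} = min b r + 1 - max a l := by
  rw [← Nat.card_Icc]
  congr 1
  ext p
  simp only [mem_filter, mem_Icc, max_le_iff, le_min_iff]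
  constructor
  · rintro ⟨hp, hCp⟩
    have := (hC p (mem_Icc.2 hp)).1 hCp
    omega
  · rintro ⟨⟨h1, h2⟩, h3, h4⟩
    exact ⟨⟨h1, h3⟩, (hC p (mem_Icc.2 ⟨h1, h3⟩)).2 ⟨h2, h4⟩⟩

lemma IsBalanced.endpoints_of_window {a b l r : ℕ} {C : ℕ → Prop} [DecidablePred C]
    (hC : ∀ p ∈ Icc a b, C p ↔ l ≤ p ∧ p ≤ r) (hbal : IsBalanced (Icc a b) C) :
    -- the blue points of `[a, b]` lie right of `[l, r]`, left of it, or on both sides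
    (r < b ∧ a + b = 2 * r + 1) ∨ (a < l ∧ a + b + 1 = 2 * l) ∨
      (a < l ∧ r < b ∧ b + 1 = a + 2 * (r + 1 - l)) := by
  obtain ⟨heq, hpos⟩ := hbal
  have htotal := card_filter_add_card_filter_not (s := Icc a b) (p := C)
  rw [Nat.card_Icc] at htotal
  rw [card_filter_Icc_of_iff hC] at heq hpos htotal
  omega

/-- Truncated subtraction makes the lower end `i + 2m - n` vanish exactly when
`i ≤ n - 2m + 1`, so both regimes of `B_i` are the same window. -/
lemma mRestrictedRed_iff {n m i p : ℕ} (hmn : 2 * m ≤ n) (hp : 1 ≤ p) :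
    mRestrictedRed n m i p ↔ i + 2 * m - n ≤ p ∧ p ≤ m + i - 1 := by
  unfold mRestrictedRed
  split_ifs <;> omega

lemma IsBalanced.endpoints_mRestrictedRed {n m i a b : ℕ} (hmn : 2 * m < n) (ha : 1 ≤ a)
    (hb : b ≤ n) (hbal : IsBalanced (Icc a b) (mRestrictedRed n m i)) :
    a + b + 1 = 2 * (m + i) ∨ a + b + 1 + 2 * n = 2 * (i + 2 * m) := by
  have := hbal.endpoints_of_window fun p hp => mRestrictedRed_iff hmn.le (ha.trans (mem_Icc.1 hp).1)
  -- `[a, b]` cannot contain the whole red window: it has `n - m > n / 2` points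
  omega

lemma eq_of_isBalanced_mRestrictedRed {n m i j a b : ℕ} (hmn : 2 * m < n) (ha : 1 ≤ a)
    (hb : b ≤ n) (hi : i ∈ Icc 1 (n - m)) (hj : j ∈ Icc 1 (n - m))
    (hbi : IsBalanced (Icc a b) (mRestrictedRed n m i))
    (hbj : IsBalanced (Icc a b) (mRestrictedRed n m j)) : i = j := by
  have := hbi.endpoints_mRestrictedRed hmn ha hb
  have := hbj.endpoints_mRestrictedRed hmn ha hb
  rw [mem_Icc] at hi hj
  omega

theorem stmt_9_general (n m : ℕ) (hmn : 2 * m < n) (F : Finset (ℝ × ℝ))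
    (h : ∀ i : ℕ, 1 ≤ i → i ≤ n - m → ∃ I ∈ F,
      ((Finset.Icc 1 n).filter
        (fun (p : ℕ) => I.1 ≤ (p : ℝ) ∧ (p : ℝ) ≤ I.2 ∧
          mRestrictedRed n m i p)).card =
      ((Finset.Icc 1 n).filter
        (fun (p : ℕ) => I.1 ≤ (p : ℝ) ∧ (p : ℝ) ≤ I.2 ∧
          ¬ mRestrictedRed n m i p)).card ∧
      0 < ((Finset.Icc 1 n).filter
        (fun (p : ℕ) => I.1 ≤ (p : ℝ) ∧ (p : ℝ) ≤ I.2 ∧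
          mRestrictedRed n m i p)).card) :
    n - m ≤ F.card := by
  choose! I hIF hbal hpos using h
  have hI : ∀ i ∈ Icc 1 (n - m), IsBalanced (pointsIn n (I i)) (mRestrictedRed n m i) := by
    intro i hi
    obtain ⟨hi1, hi2⟩ := mem_Icc.1 hi
    simpa only [IsBalanced, filter_pointsIn] using And.intro (hbal i hi1 hi2) (hpos i hi1 hi2)
  calc n - m = #(Icc 1 (n - m)) := by simp
    _ ≤ #F := by
      refine card_le_card_of_injOn I (fun i hi => hIF i (mem_Icc.1 hi).1 (mem_Icc.1 hi).2) ?_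
      intro i hi j hj hij
      have hbi := hI i hi
      have hbj := hI j hj
      rw [hij, pointsIn_eq_Icc] at hbi
      rw [pointsIn_eq_Icc] at hbj
      exact eq_of_isBalanced_mRestrictedRed hmn (le_max_left _ _) (min_le_left _ _) hi hj hbi hbj

/-- For `P = {1,…,n}` and `m < n/2`, any family of intervals containing, for
each of the `n - m` specific `m`-restricted bicolorings `B_1, …, B_{n-m}`, a
balanced interval (equally many, and at least one of each, red and blue
points of `P`), must have size at least `n - m`. -/
theorem stmt_9 (n m : ℕ) (hm : 1 ≤ m) (hmn : 2 * m < n) (F : Finset (ℝ × ℝ))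
    (h : ∀ i : ℕ, 1 ≤ i → i ≤ n - m → ∃ I ∈ F,
      ((Finset.Icc 1 n).filter
        (fun (p : ℕ) => I.1 ≤ (p : ℝ) ∧ (p : ℝ) ≤ I.2 ∧
          mRestrictedRed n m i p)).card =
      ((Finset.Icc 1 n).filter
        (fun (p : ℕ) => I.1 ≤ (p : ℝ) ∧ (p : ℝ) ≤ I.2 ∧
          ¬ mRestrictedRed n m i p)).card ∧
      0 < ((Finset.Icc 1 n).filter
        (fun (p : ℕ) => I.1 ≤ (p : ℝ) ∧ (p : ℝ) ≤ I.2 ∧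
          mRestrictedRed n m i p)).card) :
    n - m ≤ F.card :=
  stmt_9_general n m hmn F h
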